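/- (Random scalar case, structural properties) Under the hypotheses that X has support N_n = {1,…,n} with binary partition random variables (A_⟨α⟩, ⟨α⟩ ∈ Ω), X* has support of size at most n, and (B_⟨α⟩, ⟨α⟩ ∈ Ω) satisfy H(B_⟨α⟩, ⟨α⟩ ∈ Δ) = H(A_⟨α⟩, ⟨α⟩ ∈ Δ) for every Δ ⊆ Ω and H(B_⟨α⟩ | X*) = 0 for every ⟨α⟩ ∈ Ω, the following hold: (1) the random variables B_⟨α⟩, ⟨α⟩ ∈ Ω, are pairwise distinct (H(B_⟨α⟩ | B_⟨β⟩) > 0 and H(B_⟨β⟩ | B_⟨α⟩) > 0 for ⟨α⟩ ≠ ⟨β⟩) and each has nonzero entropy; (2) the support of X* has size exactly n; (3) each B_⟨α⟩ takes exactly two values, i.e., is a binary partition random variable of X*; (4) every binary random variable B* with H(B* | X*) = 0 and H(B*) > 0 coincides with some B_⟨α⟩ in the sense that H(B* | B_⟨α⟩) = H(B_⟨α⟩ | B*) = 0; and (5) for each i ∈ N_n, B_⟨{i}⟩ is an indicator random variable of X*, i.e., it determines whether X* equals some particular element of its support. -/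

import Mathlib

open scoped BigOperators

/-- Probability of an event under a pmf `μ` on a finite outcome space. -/
noncomputable def probOf {Ω : Type*} [Fintype Ω] (μ : Ω → ℝ) (E : Set Ω) : ℝ :=
  ∑ ω, E.indicator μ ω

/-- Shannon entropy (in bits) of the random variable `X` on the finite
probability space `(Ω, μ)`. -/
noncomputable def shEntropy {Ω : Type*} {S : Type*} [Fintype Ω] (μ : Ω → ℝ) (X : Ω → S) : ℝ :=
  ∑ ω, μ ω * (- Real.logb 2 (probOf μ {ω' | X ω' = X ω}))

/-- Conditional Shannon entropy `H(Y | X)` (in bits). -/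
noncomputable def shCondEntropy {Ω S T : Type*} [Fintype Ω] (μ : Ω → ℝ)
    (Y : Ω → T) (X : Ω → S) : ℝ :=
  shEntropy μ (fun ω => (X ω, Y ω)) - shEntropy μ X

/-- The support of the random variable `X` (values taken with positive probability). -/
noncomputable def rvSupport {Ω S : Type*} [Fintype Ω] (μ : Ω → ℝ) (X : Ω → S) : Finset S := by
  classical exact (Finset.univ.filter fun ω => 0 < μ ω).image X

/-- `μ` is a probability mass function. -/
def IsPMF {Ω : Type*} [Fintype Ω] (μ : Ω → ℝ) : Prop :=
  (∀ ω, 0 ≤ μ ω) ∧ ∑ ω, μ ω = 1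

/-- A polymatroid on the finite ground set `Z`. -/
def IsPolymatroid {Z : Type*} [DecidableEq Z] (h : Finset Z → ℝ) : Prop :=
  h ∅ = 0 ∧ (∀ A : Finset Z, 0 ≤ h A) ∧ (∀ A B : Finset Z, A ⊆ B → h A ≤ h B) ∧
    ∀ A B : Finset Z, h (A ∩ B) + h (A ∪ B) ≤ h A + h B

/-- The binary partition random variable `A_⟨α⟩` of a random variable on
`Fin n` (the probability space is taken to be `Fin n` itself, with `X` the
identity): `A_⟨α⟩` records whether `X ∈ α` or `X ∈ αᶜ`.  Unordered partitions
`⟨α⟩ = {α, αᶜ}` are represented by the part `α` not containing the first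
element `0` (the paper's convention `1 ∉ α`). -/
def bpVar {n : ℕ} (α : Finset (Fin n)) : Fin n → Bool := fun x => decide (x ∈ α)

/-- The index set `Ω` of unordered binary partitions `⟨α⟩ = {α, αᶜ}` of
`{1, …, n}`, represented by the part `α` not containing the first element. -/
abbrev PartIdx (n : ℕ) [NeZero n] : Type :=
  {α : Finset (Fin n) // α.Nonempty ∧ 0 ∉ α}

/-!
Only the functional-dependence structure of the `B_⟨α⟩` matters. Since `H(Y | X) = 0` exactly
when `X` determines `Y` on the support, the entropy equalities say that a family `B_Δ`
determines `B_⟨α⟩` if and only if `A_Δ` determines `A_⟨α⟩`. Each `B_⟨α⟩` is a function of `X*`,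
so this is a statement about functions on the support `S` of `X*`, which has at most `n` points.

The `n` singleton cuts `⟨{i}⟩` are such that no subfamily missing two of them determines a
missing one. Adding an undetermined cut strictly increases the number of joint values on `S`, so
any `k < n` singleton cuts take exactly `k + 1` joint values there (at least, by building them
up from nothing; at most, by completing them to `n - 1` cuts inside `|S| ≤ n` values). Hence
`|S| = n`, and a count shows that every singleton cut has a one-point block `{τ i}` on `S`, with
`τ : Fin n → S` a bijection. Through `τ` every `B_⟨α⟩` becomes `A_⟨α⟩`: it is constant on each
side of `α`, being determined by the singleton cuts of the other side, and it is not constant.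
The five claims are read off this relabelling.
-/

section Determination

variable {Ω S U : Type*} {μ : Ω → ℝ}

def Determines (μ : Ω → ℝ) (X : Ω → S) (Y : Ω → U) : Prop :=
  ∀ ω ω', 0 < μ ω → 0 < μ ω' → X ω = X ω' → Y ω = Y ω'

def SamePartition (μ : Ω → ℝ) (X : Ω → S) (Y : Ω → U) : Prop :=
  ∀ ω ω', 0 < μ ω → 0 < μ ω' → (X ω = X ω' ↔ Y ω = Y ω')

lemma SamePartition.determines {X : Ω → S} {Y : Ω → U} (h : SamePartition μ X Y) :
    Determines μ X Y :=
  fun ω ω' hω hω' => (h ω ω' hω hω').1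

lemma SamePartition.symm {X : Ω → S} {Y : Ω → U} (h : SamePartition μ X Y) :
    SamePartition μ Y X :=
  fun ω ω' hω hω' => (h ω ω' hω hω').symm

lemma SamePartition.trans {V : Type*} {X : Ω → S} {Y : Ω → U} {Z : Ω → V}
    (hXY : SamePartition μ X Y) (hYZ : SamePartition μ Y Z) : SamePartition μ X Z :=
  fun ω ω' hω hω' => (hXY ω ω' hω hω').trans (hYZ ω ω' hω hω')

lemma Determines.trans {V : Type*} {X : Ω → S} {Y : Ω → U} {Z : Ω → V}
    (hXY : Determines μ X Y) (hYZ : Determines μ Y Z) : Determines μ X Z :=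
  fun ω ω' hω hω' h => hYZ ω ω' hω hω' (hXY ω ω' hω hω' h)

lemma Determines.exists_factor [Nonempty Ω] {X : Ω → S} {Y : Ω → U} (h : Determines μ X Y) :
    ∃ g : S → U, ∀ ω, 0 < μ ω → Y ω = g (X ω) := by
  refine ⟨fun s => Y (Classical.epsilon fun ω => 0 < μ ω ∧ X ω = s), fun ω hω => ?_⟩
  have hspec := Classical.epsilon_spec (p := fun ω' => 0 < μ ω' ∧ X ω' = X ω) ⟨ω, hω, rfl⟩
  exact h ω _ hω hspec.1 hspec.2.symm

end Determination

section Entropy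

variable {Ω S U : Type*} [Fintype Ω] {μ : Ω → ℝ}

lemma probOf_nonneg (h0 : ∀ ω, 0 ≤ μ ω) (E : Set Ω) : 0 ≤ probOf μ E :=
  Finset.sum_nonneg fun ω _ => Set.indicator_nonneg (fun ω _ => h0 ω) ω

lemma le_probOf (h0 : ∀ ω, 0 ≤ μ ω) {E : Set Ω} {ω : Ω} (hω : ω ∈ E) : μ ω ≤ probOf μ E := by
  rw [← Set.indicator_of_mem hω μ]
  exact Finset.single_le_sum (fun ω _ => Set.indicator_nonneg (fun ω _ => h0 ω) ω)
    (Finset.mem_univ ω)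

lemma probOf_union {E F : Set Ω} (h : Disjoint E F) :
    probOf μ (E ∪ F) = probOf μ E + probOf μ F := by
  simp only [probOf, Set.indicator_union_of_disjoint h, Finset.sum_add_distrib]

lemma probOf_eq_zero_iff (h0 : ∀ ω, 0 ≤ μ ω) {E : Set Ω} :
    probOf μ E = 0 ↔ ∀ ω ∈ E, μ ω = 0 := by
  rw [probOf, Finset.sum_eq_zero_iff_of_nonneg fun ω _ =>
    Set.indicator_nonneg (fun ω _ => h0 ω) ω]
  simp [Set.indicator_apply_eq_zero]

lemma shEntropy_congr {X : Ω → S} {Y : Ω → U} (h : ∀ ω ω', X ω' = X ω ↔ Y ω' = Y ω) :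
    shEntropy μ X = shEntropy μ Y := by
  unfold shEntropy
  congr! 5 with ω
  exact Set.ext fun ω' => h ω ω'

lemma shEntropy_const (hμ : IsPMF μ) (c : S) : shEntropy μ (fun _ => c) = 0 := by
  simp [shEntropy, probOf, hμ.2]

lemma shCondEntropy_eq_sum (Y : Ω → U) (X : Ω → S) :
    shCondEntropy μ Y X = ∑ ω, μ ω * (Real.logb 2 (probOf μ {ω' | X ω' = X ω}) -
      Real.logb 2 (probOf μ {ω' | (X ω', Y ω') = (X ω, Y ω)})) := by
  simp only [shCondEntropy, shEntropy, ← Finset.sum_sub_distrib]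
  exact Finset.sum_congr rfl fun ω _ => by ring

lemma probOf_fiber_eq (Y : Ω → U) (X : Ω → S) (ω : Ω) :
    probOf μ {ω' | X ω' = X ω} = probOf μ {ω' | (X ω', Y ω') = (X ω, Y ω)} +
      probOf μ {ω' | X ω' = X ω ∧ Y ω' ≠ Y ω} := by
  rw [← probOf_union]
  · congr 1
    ext ω'
    simp only [Set.mem_ofPred_eq, Set.mem_union, Prod.mk.injEq]
    tauto
  · refine Set.disjoint_left.2 fun ω' h1 h2 => h2.2 ?_
    exact (Prod.mk.inj h1).2

lemma shCondEntropy_summand_nonneg (h0 : ∀ ω, 0 ≤ μ ω) (Y : Ω → U) (X : Ω → S) (ω : Ω) :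
    0 ≤ μ ω * (Real.logb 2 (probOf μ {ω' | X ω' = X ω}) -
      Real.logb 2 (probOf μ {ω' | (X ω', Y ω') = (X ω, Y ω)})) := by
  rcases (h0 ω).eq_or_lt with hω | hω
  · rw [← hω, zero_mul]
  refine mul_nonneg hω.le (sub_nonneg.2 (Real.logb_le_logb_of_le (by norm_num)
    (hω.trans_le (le_probOf h0 rfl)) ?_))
  rw [probOf_fiber_eq Y X ω]
  exact le_add_of_nonneg_right (probOf_nonneg h0 _)

lemma shCondEntropy_summand_eq_zero_iff (h0 : ∀ ω, 0 ≤ μ ω) (Y : Ω → U) (X : Ω → S) {ω : Ω}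
    (hω : 0 < μ ω) :
    μ ω * (Real.logb 2 (probOf μ {ω' | X ω' = X ω}) -
      Real.logb 2 (probOf μ {ω' | (X ω', Y ω') = (X ω, Y ω)})) = 0 ↔
      ∀ ω', 0 < μ ω' → X ω' = X ω → Y ω' = Y ω := by
  have hpair : 0 < probOf μ {ω' | (X ω', Y ω') = (X ω, Y ω)} :=
    hω.trans_le (le_probOf h0 rfl)
  have hrest := probOf_nonneg h0 {ω' | X ω' = X ω ∧ Y ω' ≠ Y ω}
  rw [mul_eq_zero, or_iff_right hω.ne', sub_eq_zero, probOf_fiber_eq Y X ω,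
    (Real.logb_injOn_pos (by norm_num)).eq_iff (by simp only [Set.mem_Ioi]; linarith) hpair,
    add_eq_left, probOf_eq_zero_iff h0]
  refine ⟨fun h ω' hω' hX => by_contra fun hY => hω'.ne' (h ω' ⟨hX, hY⟩),
    fun h ω' hω' => by_contra fun hpos => hω'.2 (h ω' ((h0 ω').lt_of_ne' hpos) hω'.1)⟩

lemma shCondEntropy_nonneg (h0 : ∀ ω, 0 ≤ μ ω) (Y : Ω → U) (X : Ω → S) :
    0 ≤ shCondEntropy μ Y X := by
  rw [shCondEntropy_eq_sum]
  exact Finset.sum_nonneg fun ω _ => shCondEntropy_summand_nonneg h0 Y X ω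

lemma shCondEntropy_eq_zero_iff (h0 : ∀ ω, 0 ≤ μ ω) {Y : Ω → U} {X : Ω → S} :
    shCondEntropy μ Y X = 0 ↔ Determines μ X Y := by
  rw [shCondEntropy_eq_sum, Finset.sum_eq_zero_iff_of_nonneg fun ω _ =>
    shCondEntropy_summand_nonneg h0 Y X ω]
  refine ⟨fun h ω ω' hω hω' hX =>
      ((shCondEntropy_summand_eq_zero_iff h0 Y X hω').1 (h ω' (Finset.mem_univ _)) ω hω hX),
    fun h ω _ => ?_⟩
  rcases (h0 ω).eq_or_lt with hω | hω
  · rw [← hω, zero_mul]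
  exact (shCondEntropy_summand_eq_zero_iff h0 Y X hω).2 fun ω' hω' hX => h ω' ω hω' hω hX

lemma shCondEntropy_pos_iff (h0 : ∀ ω, 0 ≤ μ ω) {Y : Ω → U} {X : Ω → S} :
    0 < shCondEntropy μ Y X ↔ ¬ Determines μ X Y := by
  rw [← shCondEntropy_eq_zero_iff h0, (shCondEntropy_nonneg h0 Y X).lt_iff_ne, ne_comm]

lemma shCondEntropy_const (hμ : IsPMF μ) (Y : Ω → U) (c : S) :
    shCondEntropy μ Y (fun _ => c) = shEntropy μ Y := by
  rw [shCondEntropy, shEntropy_const hμ, sub_zero]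
  exact shEntropy_congr fun ω ω' => by simp

lemma shEntropy_pos_iff (hμ : IsPMF μ) {X : Ω → S} :
    0 < shEntropy μ X ↔ ∃ ω ω', 0 < μ ω ∧ 0 < μ ω' ∧ X ω ≠ X ω' := by
  rw [← shCondEntropy_const hμ X (), shCondEntropy_pos_iff hμ.1]
  simp [Determines]

lemma mem_rvSupport_iff {X : Ω → S} {s : S} : s ∈ rvSupport μ X ↔ ∃ ω, 0 < μ ω ∧ X ω = s := by
  simp [rvSupport]

lemma IsPMF.exists_pos (hμ : IsPMF μ) : ∃ ω, 0 < μ ω := by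
  by_contra! h
  have := Finset.sum_nonpos fun ω (_ : ω ∈ Finset.univ) => h ω
  rw [hμ.2] at this
  norm_num at this

lemma rvSupport_eq_image {S : Type*} [DecidableEq S] (X : Ω → S) :
    rvSupport μ X = (Finset.univ.filter fun ω => 0 < μ ω).image X := by
  ext
  simp [mem_rvSupport_iff]

lemma rvSupport_id_eq_univ (hμ : ∀ ω, 0 < μ ω) : rvSupport μ id = Finset.univ :=
  Finset.eq_univ_of_forall fun ω => mem_rvSupport_iff.2 ⟨ω, hμ ω, rfl⟩

end Entropy

section Kernel

variable {T U V : Type*} [DecidableEq U] [DecidableEq V] {s : Finset T} {f : T → U} {g : T → V}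

lemma card_image_pair_eq_of_kernel_le (h : ∀ t ∈ s, ∀ t' ∈ s, g t = g t' → f t = f t') :
    (s.image fun t => (g t, f t)).card = (s.image g).card := by
  rw [← Finset.card_image_of_injOn (f := Prod.fst), Finset.image_image]
  · rfl
  · rintro _ hx _ hy hxy
    obtain ⟨t, ht, rfl⟩ := Finset.mem_image.1 hx
    obtain ⟨t', ht', rfl⟩ := Finset.mem_image.1 hy
    exact Prod.ext hxy (h t ht t' ht' hxy)

lemma card_image_le_card_image_of_kernel_le (h : ∀ t ∈ s, ∀ t' ∈ s, g t = g t' → f t = f t') :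
    (s.image f).card ≤ (s.image g).card := by
  have hsnd : s.image f = (s.image fun t => (g t, f t)).image Prod.snd := by
    rw [Finset.image_image]
    rfl
  rw [← card_image_pair_eq_of_kernel_le h, hsnd]
  exact Finset.card_image_le

lemma card_image_lt_card_image_of_kernel_lt (h : ∀ t ∈ s, ∀ t' ∈ s, g t = g t' → f t = f t')
    (hlt : ∃ t ∈ s, ∃ t' ∈ s, f t = f t' ∧ g t ≠ g t') :
    (s.image f).card < (s.image g).card := by
  obtain ⟨t, ht, t', ht', hf, hg⟩ := hlt
  have hsnd : s.image f = (s.image fun t => (g t, f t)).image Prod.snd := by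
    rw [Finset.image_image]
    rfl
  rw [← card_image_pair_eq_of_kernel_le h, hsnd]
  refine Finset.card_image_le.lt_of_ne fun heq => hg ?_
  have hinj := Finset.card_image_iff.1 heq
  exact congrArg Prod.fst (hinj (Finset.mem_image_of_mem _ ht) (Finset.mem_image_of_mem _ ht') hf)

lemma card_image_eq_card_image_of_kernel_eq (h : ∀ t ∈ s, ∀ t' ∈ s, f t = f t' ↔ g t = g t') :
    (s.image f).card = (s.image g).card :=
  le_antisymm (card_image_le_card_image_of_kernel_le fun t ht t' ht' => (h t ht t' ht').2)
    (card_image_le_card_image_of_kernel_le fun t ht t' ht' => (h t ht t' ht').1)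

lemma eq_of_ne_of_ne_of_card_le_two {A : Finset U} (hA : A.card ≤ 2) {x y z : U} (hx : x ∈ A)
    (hy : y ∈ A) (hz : z ∈ A) (hxz : x ≠ z) (hyz : y ≠ z) : x = y := by
  by_contra hxy
  have := Finset.two_lt_card.2 ⟨x, hx, y, hy, z, hz, hxy, hxz, hyz⟩
  omega

def IsIndicatorOn (s : Finset T) (φ : T → U) (t : T) : Prop :=
  t ∈ s ∧ ∀ u ∈ s, ∀ u' ∈ s, (φ u = φ u' ↔ (u = t ↔ u' = t))

lemma isIndicatorOn_of_fiber {φ : T → U} {t : T} (h2 : (s.image φ).card ≤ 2) (ht : t ∈ s)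
    (hfib : ∀ u ∈ s, φ u = φ t → u = t) : IsIndicatorOn s φ t := by
  refine ⟨ht, fun u hu u' hu' => ⟨fun h => ⟨fun hut => hfib u' hu' ?_, fun hut => hfib u hu ?_⟩,
    fun h => ?_⟩⟩
  · rw [← h, hut]
  · rw [h, hut]
  by_cases hut : u = t
  · rw [hut, (h.1 hut)]
  · exact eq_of_ne_of_ne_of_card_le_two h2 (Finset.mem_image_of_mem φ hu)
      (Finset.mem_image_of_mem φ hu') (Finset.mem_image_of_mem φ ht)
      (fun h' => hut (hfib u hu h')) (fun h' => hut (h.2 (hfib u' hu' h')))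

end Kernel

section DeterminesOn

variable {T ι κ : Type*} {β : ι → Type*}

def DeterminesOn (s : Finset T) (f : (i : ι) → T → β i) (J : Finset ι) (i : ι) : Prop :=
  ∀ t ∈ s, ∀ t' ∈ s, (∀ j ∈ J, f j t = f j t') → f i t = f i t'

lemma determinesOn_image_iff [DecidableEq κ] {γ : κ → Type*} {s : Finset T}
    {g : (a : κ) → T → γ a} (e : ι → κ) (J : Finset ι) (i : ι) :
    DeterminesOn s g (J.image e) (e i) ↔ DeterminesOn s (fun j => g (e j)) J i := by
  simp [DeterminesOn]

open Classical in
noncomputable def jointCard (s : Finset T) (f : (i : ι) → T → β i) (J : Finset ι) : ℕ :=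
  (s.image fun t (j : J) => f j t).card

variable {s : Finset T} {f : (i : ι) → T → β i}

lemma tuple_eq_iff {J : Finset ι} {t t' : T} :
    ((fun j : J => f j t) = fun j : J => f j t') ↔ ∀ j ∈ J, f j t = f j t' := by
  simp [funext_iff]

lemma jointCard_le_card (J : Finset ι) : jointCard s f J ≤ s.card := by
  classical exact Finset.card_image_le

lemma jointCard_empty (hs : s.Nonempty) : jointCard s f ∅ = 1 := by
  classical
  refine le_antisymm (Finset.card_le_one.2 fun _ _ _ _ => funext fun j => ?_) (hs.image _).card_pos
  exact (Finset.notMem_empty _ j.2).elim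

lemma jointCard_mono {J K : Finset ι} (h : J ⊆ K) : jointCard s f J ≤ jointCard s f K := by
  classical
  exact card_image_le_card_image_of_kernel_le fun _ _ _ _ heq =>
    tuple_eq_iff.2 fun j hj => tuple_eq_iff.1 heq j (h hj)

lemma jointCard_lt_of_not_determinesOn {J K : Finset ι} {i : ι} (hJK : J ⊆ K) (hi : i ∈ K)
    (h : ¬ DeterminesOn s f J i) : jointCard s f J < jointCard s f K := by
  classical
  simp only [DeterminesOn, not_forall] at h
  obtain ⟨t, ht, t', ht', hJ, hi'⟩ := h
  exact card_image_lt_card_image_of_kernel_lt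
    (fun _ _ _ _ heq => tuple_eq_iff.2 fun j hj => tuple_eq_iff.1 heq j (hJK hj))
    ⟨t, ht, t', ht', tuple_eq_iff.2 hJ, fun heq => hi' (tuple_eq_iff.1 heq i hi)⟩

open Classical in
lemma jointCard_singleton (i : ι) : jointCard s f {i} = (s.image (f i)).card :=
  card_image_eq_card_image_of_kernel_eq fun _ _ _ _ => by simp [tuple_eq_iff]

open Classical in
lemma jointCard_pair [DecidableEq ι] (i j : ι) :
    jointCard s f {i, j} = (s.image fun t => (f i t, f j t)).card :=
  card_image_eq_card_image_of_kernel_eq fun _ _ _ _ => by simp [tuple_eq_iff]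

lemma jointCard_le_card_sdiff_add_one [DecidableEq T] {K : Finset ι} {A : Finset T}
    (hA : ∀ k ∈ K, ∀ u ∈ A, ∀ u' ∈ A, f k u = f k u') :
    jointCard s f K ≤ (s \ A).card + 1 := by
  classical
  set G := fun t (k : K) => f k t
  have hsplit : s.image G ⊆ (s \ A).image G ∪ (s ∩ A).image G := by
    intro x hx
    obtain ⟨t, ht, rfl⟩ := Finset.mem_image.1 hx
    by_cases htA : t ∈ A
    · exact Finset.mem_union_right _ (Finset.mem_image_of_mem G (Finset.mem_inter.2 ⟨ht, htA⟩))
    · exact Finset.mem_union_left _ (Finset.mem_image_of_mem G (Finset.mem_sdiff.2 ⟨ht, htA⟩))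
  have hA1 : ((s ∩ A).image G).card ≤ 1 := by
    refine Finset.card_le_one.2 fun x hx y hy => ?_
    obtain ⟨t, ht, rfl⟩ := Finset.mem_image.1 hx
    obtain ⟨t', ht', rfl⟩ := Finset.mem_image.1 hy
    exact tuple_eq_iff.2 fun k hk =>
      hA k hk t (Finset.mem_inter.1 ht).2 t' (Finset.mem_inter.1 ht').2
  calc jointCard s f K ≤ ((s \ A).image G ∪ (s ∩ A).image G).card := Finset.card_le_card hsplit
    _ ≤ ((s \ A).image G).card + ((s ∩ A).image G).card := Finset.card_union_le _ _
    _ ≤ (s \ A).card + 1 := add_le_add Finset.card_image_le hA1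

end DeterminesOn

section SingletonIndicators

open Finset

variable {T ι : Type*} [Fintype ι] [DecidableEq ι] {β : ι → Type*} {s : Finset T}
  {f : (i : ι) → T → β i}

/-- The dependence pattern of the indicators `x ↦ decide (x = i)` of the points of `ι`. -/
def LikeSingletonIndicators (s : Finset T) (f : (i : ι) → T → β i) : Prop :=
  ∀ (J : Finset ι) (i : ι), i ∉ J → insert i J ≠ univ → ¬ DeterminesOn s f J i

namespace LikeSingletonIndicators

lemma add_card_le_jointCard (hf : LikeSingletonIndicators s f) {J I : Finset ι}
    (hd : Disjoint J I) (hne : J ∪ I ≠ univ) :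
    jointCard s f J + I.card ≤ jointCard s f (J ∪ I) := by
  induction I using Finset.induction_on with
  | empty => simp
  | insert i I hiI ih =>
    rw [disjoint_insert_right] at hd
    rw [union_insert] at hne ⊢
    have hne' : J ∪ I ≠ univ := fun h => hne (univ_subset_iff.1 (h ▸ subset_insert i _))
    have hlt := jointCard_lt_of_not_determinesOn (f := f) (subset_insert i (J ∪ I))
      (mem_insert_self i _) (hf _ i (by simp [hd.1, hiI]) hne)
    have := ih hd.2 hne'
    rw [card_insert_of_notMem hiI]
    omega

lemma min_le_jointCard (hs : s.Nonempty) (hf : LikeSingletonIndicators s f) (J : Finset ι) :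
    min (J.card + 1) (Fintype.card ι) ≤ jointCard s f J := by
  by_cases hJ : J = univ
  · subst hJ
    rcases isEmpty_or_nonempty ι with hι | ⟨⟨x⟩⟩
    · simp
    have h := hf.add_card_le_jointCard (disjoint_empty_left (univ.erase x)) (by simp)
    rw [jointCard_empty hs, empty_union, card_erase_of_mem (mem_univ x), card_univ] at h
    have := jointCard_mono (s := s) (f := f) (erase_subset x univ)
    omega
  · have h := hf.add_card_le_jointCard (disjoint_empty_left J) (by rwa [empty_union])
    rw [jointCard_empty hs, empty_union] at h
    omega

lemma jointCard_le (hcard : s.card ≤ Fintype.card ι) (hf : LikeSingletonIndicators s f)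
    {J : Finset ι} (hJ : J ≠ univ) : jointCard s f J ≤ J.card + 1 := by
  obtain ⟨x, hx⟩ : ∃ x, x ∉ J := by
    by_contra! h
    exact hJ (eq_univ_of_forall h)
  have hJx : J ⊆ univ.erase x := fun j hj => mem_erase.2 ⟨fun h => hx (h ▸ hj), mem_univ j⟩
  have h := hf.add_card_le_jointCard (disjoint_sdiff (s := J) (t := univ.erase x))
    (by rw [union_sdiff_of_subset hJx]; simp)
  rw [union_sdiff_of_subset hJx, card_sdiff_of_subset hJx, card_erase_of_mem (mem_univ x),
    card_univ] at h
  have := jointCard_le_card (s := s) (f := f) (univ.erase x)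
  have := card_le_card hJx
  rw [card_erase_of_mem (mem_univ x), card_univ] at this
  omega

lemma card_eq (hs : s.Nonempty) (hcard : s.card ≤ Fintype.card ι)
    (hf : LikeSingletonIndicators s f) : s.card = Fintype.card ι := by
  have := hf.min_le_jointCard hs univ
  have := jointCard_le_card (s := s) (f := f) univ
  rw [card_univ] at *
  omega

open Classical in
lemma card_image_le_two (hcard : s.card ≤ Fintype.card ι) (hf : LikeSingletonIndicators s f)
    (i : ι) : (s.image (f i)).card ≤ 2 := by
  by_cases hn : Fintype.card ι ≤ 2
  · exact card_image_le.trans (hcard.trans hn)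
  have hi : ({i} : Finset ι) ≠ univ := fun h => hn (by simp [← card_univ, ← h])
  simpa [jointCard_singleton] using hf.jointCard_le hcard hi

open Classical in
lemma min_two_le_card_image (hs : s.Nonempty) (hf : LikeSingletonIndicators s f) (i : ι) :
    min 2 (Fintype.card ι) ≤ (s.image (f i)).card := by
  simpa [jointCard_singleton] using hf.min_le_jointCard hs {i}

open Classical in
lemma card_image_pair_le_three (hcard : s.card ≤ Fintype.card ι)
    (hf : LikeSingletonIndicators s f) {i j : ι} (hij : i ≠ j) :
    (s.image fun t => (f i t, f j t)).card ≤ 3 := by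
  by_cases hn : Fintype.card ι ≤ 3
  · exact card_image_le.trans (hcard.trans hn)
  have hij' : ({i, j} : Finset ι) ≠ univ := fun h => hn (by
    rw [← card_univ, ← h]
    exact (card_le_two).trans (by norm_num))
  have h := hf.jointCard_le hcard hij'
  rwa [jointCard_pair, card_pair hij] at h

open Classical in
lemma min_three_le_card_image_pair (hs : s.Nonempty) (hf : LikeSingletonIndicators s f)
    {i j : ι} (hij : i ≠ j) : min 3 (Fintype.card ι) ≤ (s.image fun t => (f i t, f j t)).card := by
  have h := hf.min_le_jointCard hs {i, j}
  rwa [jointCard_pair, card_pair hij] at h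

lemma constOn_or_constOn (hcard : s.card ≤ Fintype.card ι) (hf : LikeSingletonIndicators s f)
    {c j : ι} (hcj : c ≠ j) {P Q : Finset T} (hP : P ⊆ s) (hQ : Q ⊆ s)
    (hPQ : ∀ u ∈ P, ∀ u' ∈ Q, f c u ≠ f c u') :
    (∀ u ∈ P, ∀ u' ∈ P, f j u = f j u') ∨ (∀ u ∈ Q, ∀ u' ∈ Q, f j u = f j u') := by
  classical
  by_contra! h
  obtain ⟨⟨u₁, hu₁, u₂, hu₂, h₁₂⟩, ⟨u₃, hu₃, u₄, hu₄, h₃₄⟩⟩ := h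
  have h3 := hf.card_image_pair_le_three hcard hcj
  set G := fun t => (f c t, f j t)
  have hdisj : Disjoint (P.image G) (Q.image G) := by
    refine disjoint_left.2 fun x hxP hxQ => ?_
    obtain ⟨u, hu, rfl⟩ := mem_image.1 hxP
    obtain ⟨u', hu', hG⟩ := mem_image.1 hxQ
    exact hPQ u hu u' hu' (congrArg Prod.fst hG).symm
  have hP2 : 1 < (P.image G).card := one_lt_card.2 ⟨G u₁, mem_image_of_mem G hu₁, G u₂,
    mem_image_of_mem G hu₂, fun h => h₁₂ (congrArg Prod.snd h)⟩
  have hQ2 : 1 < (Q.image G).card := one_lt_card.2 ⟨G u₃, mem_image_of_mem G hu₃, G u₄,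
    mem_image_of_mem G hu₄, fun h => h₃₄ (congrArg Prod.snd h)⟩
  have hsub : P.image G ∪ Q.image G ⊆ s.image G :=
    union_subset (image_subset_image hP) (image_subset_image hQ)
  have h4 := card_le_card hsub
  rw [card_union_of_disjoint hdisj] at h4
  omega

lemma card_lt_card_sdiff_of_constOn [DecidableEq T] (hs : s.Nonempty)
    (hf : LikeSingletonIndicators s f) {c : ι} {K : Finset ι} {A : Finset T} (hcK : c ∉ K)
    (hK : ∀ j ∈ insert c K, ∀ u ∈ A, ∀ u' ∈ A, f j u = f j u')
    (hA : (s \ A).card + 1 < Fintype.card ι) : K.card < (s \ A).card := by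
  have h1 := jointCard_le_card_sdiff_add_one (s := s) hK
  have h2 := hf.min_le_jointCard hs (insert c K)
  rw [card_insert_of_notMem hcK] at h2
  omega

lemma card_le_one_or_card_le_one (hs : s.Nonempty) (hcard : s.card ≤ Fintype.card ι)
    (hf : LikeSingletonIndicators s f) {c : ι} {P Q : Finset T} (hPs : P ⊆ s) (hQs : Q ⊆ s)
    (hsize : P.card + Q.card = s.card) (hPc : ∀ u ∈ P, ∀ u' ∈ P, f c u = f c u')
    (hQc : ∀ u ∈ Q, ∀ u' ∈ Q, f c u = f c u') (hPQ : ∀ u ∈ P, ∀ u' ∈ Q, f c u ≠ f c u') :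
    P.card ≤ 1 ∨ Q.card ≤ 1 := by
  classical
  by_contra! h
  have hscard := hf.card_eq hs hcard
  have hsP : (s \ P).card = Q.card := by
    rw [card_sdiff_of_subset hPs]
    omega
  have hsQ : (s \ Q).card = P.card := by
    rw [card_sdiff_of_subset hQs]
    omega
  -- each index `≠ c` is constant on `P` or on `Q`, but fewer than `|Q|` are constant on `P` and
  -- fewer than `|P|` on `Q`: `n - 1 ≤ n - 2`
  set KP := (univ.erase c).filter fun j => ∀ u ∈ P, ∀ u' ∈ P, f j u = f j u'
  set KQ := (univ.erase c).filter fun j => ∀ u ∈ Q, ∀ u' ∈ Q, f j u = f j u'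
  have hKP := hf.card_lt_card_sdiff_of_constOn hs (K := KP) (by simp [KP])
    ((forall_mem_insert _ _ _).2 ⟨hPc, fun j hj => (mem_filter.1 hj).2⟩) (by omega)
  have hKQ := hf.card_lt_card_sdiff_of_constOn hs (K := KQ) (by simp [KQ])
    ((forall_mem_insert _ _ _).2 ⟨hQc, fun j hj => (mem_filter.1 hj).2⟩) (by omega)
  have hcover : univ.erase c ⊆ KP ∪ KQ := fun j hj => by
    rcases hf.constOn_or_constOn hcard (ne_of_mem_erase hj).symm hPs hQs hPQ with h | h
    · exact mem_union_left _ (mem_filter.2 ⟨hj, h⟩)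
    · exact mem_union_right _ (mem_filter.2 ⟨hj, h⟩)
  have := (card_le_card hcover).trans (card_union_le _ _)
  rw [card_erase_of_mem (mem_univ c), card_univ] at this
  omega

lemma exists_singleton_fiber (hs : s.Nonempty) (hcard : s.card ≤ Fintype.card ι)
    (hf : LikeSingletonIndicators s f) (c : ι) : ∃ t ∈ s, ∀ u ∈ s, f c u = f c t → u = t := by
  classical
  obtain ⟨t₀, ht₀⟩ := hs
  set P := s.filter fun u => f c u = f c t₀
  set Q := s.filter fun u => f c u ≠ f c t₀
  by_cases hQ : Q.Nonempty
  · obtain ⟨t₁, ht₁⟩ := hQ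
    have hQc : ∀ u ∈ Q, ∀ u' ∈ Q, f c u = f c u' := fun u hu u' hu' =>
      eq_of_ne_of_ne_of_card_le_two (hf.card_image_le_two hcard c)
        (mem_image_of_mem _ (mem_filter.1 hu).1) (mem_image_of_mem _ (mem_filter.1 hu').1)
        (mem_image_of_mem _ ht₀) (mem_filter.1 hu).2 (mem_filter.1 hu').2
    rcases hf.card_le_one_or_card_le_one ⟨t₀, ht₀⟩ hcard (filter_subset _ s) (filter_subset _ s)
      (card_filter_add_card_filter_not _)
      (fun u hu u' hu' => (mem_filter.1 hu).2.trans (mem_filter.1 hu').2.symm) hQc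
      (fun u hu u' hu' h => (mem_filter.1 hu').2 (h ▸ (mem_filter.1 hu).2)) with hP | hQ
    · exact ⟨t₀, ht₀, fun u hu hu' =>
        card_le_one.1 hP u (mem_filter.2 ⟨hu, hu'⟩) t₀ (mem_filter.2 ⟨ht₀, rfl⟩)⟩
    · exact ⟨t₁, (mem_filter.1 ht₁).1, fun u hu hu' =>
        card_le_one.1 hQ u (mem_filter.2 ⟨hu, hu' ▸ (mem_filter.1 ht₁).2⟩) t₁ ht₁⟩
  have hconst : (s.image (f c)).card ≤ 1 := by
    refine card_le_one.2 fun x hx y hy => ?_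
    obtain ⟨u, hu, rfl⟩ := mem_image.1 hx
    obtain ⟨u', hu', rfl⟩ := mem_image.1 hy
    have hmem : ∀ v ∈ s, f c v = f c t₀ := fun v hv =>
      by_contra fun h => hQ ⟨v, mem_filter.2 ⟨hv, h⟩⟩
    rw [hmem u hu, hmem u' hu']
  have h2 := hf.min_two_le_card_image ⟨t₀, ht₀⟩ c
  have hs1 : s.card ≤ 1 := by
    have := hf.card_eq ⟨t₀, ht₀⟩ hcard
    omega
  exact ⟨t₀, ht₀, fun u hu _ => card_le_one.1 hs1 u hu t₀ ht₀⟩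

theorem exists_injective_isIndicatorOn (hs : s.Nonempty) (hcard : s.card ≤ Fintype.card ι)
    (hf : LikeSingletonIndicators s f) :
    ∃ τ : ι → T, Function.Injective τ ∧ ∀ i, IsIndicatorOn s (f i) (τ i) := by
  classical
  have hscard := hf.card_eq hs hcard
  by_cases hn : Fintype.card ι ≤ 2
  · let e : ι ≃ s := Fintype.equivOfCardEq (by rw [Fintype.card_coe, hscard])
    refine ⟨fun i => e i, Subtype.val_injective.comp e.injective, fun i =>
      isIndicatorOn_of_fiber (card_image_le.trans (by omega)) (e i).2 fun u hu h => ?_⟩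
    have hinj : Set.InjOn (f i) s := card_image_iff.1 (le_antisymm card_image_le (by
      have := hf.min_two_le_card_image hs i
      omega))
    exact hinj hu (e i).2 h
  choose τ hτs hτ using hf.exists_singleton_fiber hs hcard
  have hind : ∀ i, IsIndicatorOn s (f i) (τ i) := fun i =>
    isIndicatorOn_of_fiber (hf.card_image_le_two hcard i) (hτs i) (hτ i)
  refine ⟨τ, fun i j hij => by_contra fun hne => ?_, hind⟩
  -- two indicators of the same point would have two joint values, not three
  have hpair : (s.image fun t => (f i t, f j t)).card = (s.image (f i)).card :=
    card_image_eq_card_image_of_kernel_eq fun u hu u' hu' => by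
      rw [Prod.mk.injEq, (hind i).2 u hu u' hu', (hind j).2 u hu u' hu', hij, and_self]
  have := hf.min_three_le_card_image_pair hs hne
  have := hf.card_image_le_two hcard i
  omega

end LikeSingletonIndicators

end SingletonIndicators

section Model

open Finset

variable {n : ℕ}

lemma bpVar_eq_bpVar_iff (α : Finset (Fin n)) (x y : Fin n) :
    bpVar α x = bpVar α y ↔ (x ∈ α ↔ y ∈ α) := by
  simp [bpVar]

variable [NeZero n]

lemma exists_bpVar_ne (a : PartIdx n) : ∃ x y, bpVar a.1 x ≠ bpVar a.1 y := by
  obtain ⟨x, hx⟩ := a.2.1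
  exact ⟨x, 0, by simp [bpVar_eq_bpVar_iff, hx, a.2.2]⟩

lemma card_image_bpVar (a : PartIdx n) : (univ.image (bpVar a.1)).card = 2 := by
  obtain ⟨x, y, hxy⟩ := exists_bpVar_ne a
  refine le_antisymm ((card_le_univ _).trans (by simp)) (one_lt_card.2 ?_)
  exact ⟨_, mem_image_of_mem _ (mem_univ x), _, mem_image_of_mem _ (mem_univ y), hxy⟩

lemma bpVar_eq_bpVar_iff_of_singleton {a : PartIdx n} {i : Fin n}
    (hi : a.1 = {i} ∨ a.1 = ({i} : Finset (Fin n))ᶜ) (x : Fin n) :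
    bpVar a.1 x = bpVar a.1 i ↔ x = i := by
  rcases hi with hi | hi <;> simp [bpVar_eq_bpVar_iff, hi]

lemma eq_of_forall_bpVar_imp {a b : PartIdx n}
    (h : ∀ x y, bpVar b.1 x = bpVar b.1 y → bpVar a.1 x = bpVar a.1 y) : a = b := by
  simp only [bpVar_eq_bpVar_iff] at h
  have hab : a.1 ⊆ b.1 := fun x hx =>
    by_contra fun hxb => a.2.2 ((h x 0 (iff_of_false hxb b.2.2)).1 hx)
  obtain ⟨x₀, hx₀⟩ := a.2.1
  exact Subtype.ext (Subset.antisymm hab fun x hx =>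
    (h x x₀ (iff_of_true hx (hab hx₀))).2 hx₀)

lemma not_determinesOn_empty (a : PartIdx n) :
    ¬ DeterminesOn univ (fun b : PartIdx n => bpVar b.1) ∅ a := fun h => by
  obtain ⟨x, y, hxy⟩ := exists_bpVar_ne a
  exact hxy (h x (mem_univ x) y (mem_univ y) (by simp))

lemma isEmpty_partIdx_one : IsEmpty (PartIdx 1) := by
  refine ⟨fun a => a.2.2 ?_⟩
  obtain ⟨x, hx⟩ := a.2.1
  rwa [Subsingleton.elim x 0] at hx

/-- The cut `⟨{i}⟩`, represented by `{0}ᶜ` when `i = 0`. -/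
def singletonCut (hn : 2 ≤ n) (i : Fin n) : PartIdx n :=
  if h : i = 0 then ⟨{0}ᶜ, ⟨⟨1, hn⟩, by simp [Fin.ext_iff]⟩, by simp⟩
  else ⟨{i}, singleton_nonempty i, by simpa [eq_comm] using h⟩

lemma bpVar_singletonCut_eq_iff (hn : 2 ≤ n) (i x y : Fin n) :
    bpVar (singletonCut hn i).1 x = bpVar (singletonCut hn i).1 y ↔ (x = i ↔ y = i) := by
  unfold singletonCut
  split_ifs with h
  · subst h
    simp [bpVar_eq_bpVar_iff, not_iff_not]
  · simp [bpVar_eq_bpVar_iff]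

lemma likeSingletonIndicators_singletonCut (hn : 2 ≤ n) :
    LikeSingletonIndicators univ fun i : Fin n => bpVar (singletonCut hn i).1 := by
  intro J i hiJ hne h
  obtain ⟨x, hx⟩ : ∃ x, x ∉ insert i J := by
    by_contra! h'
    exact hne (eq_univ_of_forall h')
  rw [mem_insert, not_or] at hx
  refine hx.1 (((bpVar_singletonCut_eq_iff hn i x i).1 ?_).2 rfl)
  refine h x (mem_univ x) i (mem_univ i) fun j hj => (bpVar_singletonCut_eq_iff hn j x i).2 ?_
  exact iff_of_false (fun hxj => hx.2 (hxj ▸ hj)) (fun hij => hiJ (hij ▸ hj))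

lemma determinesOn_image_singletonCut (hn : 2 ≤ n) (a : PartIdx n) {β : Finset (Fin n)}
    (hβ : β = a.1 ∨ β = a.1ᶜ) :
    DeterminesOn univ (fun b : PartIdx n => bpVar b.1) (β.image (singletonCut hn)) a := by
  intro z _ z' _ h
  simp only [forall_mem_image, bpVar_singletonCut_eq_iff] at h
  have hzz' : z ∈ β ↔ z' ∈ β :=
    ⟨fun hz => (h hz).1 rfl ▸ hz, fun hz' => (h hz').2 rfl ▸ hz'⟩
  rw [bpVar_eq_bpVar_iff]
  rcases hβ with rfl | rfl
  · exact hzz'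
  · simpa [not_iff_not] using hzz'

end Model

section Structure

open Finset

variable {n : ℕ} [NeZero n] {T : Type*} {γ : PartIdx n → Type*} {S : Finset T}
  {g : (a : PartIdx n) → T → γ a}

lemma eq_iff_bpVar_eq_of_singletonCut (hn : 2 ≤ n)
    (hdet : ∀ Δ a, DeterminesOn S g Δ a ↔ DeterminesOn univ (fun b => bpVar b.1) Δ a)
    {τ : Fin n → T} (hτ : Set.BijOn τ Set.univ S)
    (hsing : ∀ i x y, g (singletonCut hn i) (τ x) = g (singletonCut hn i) (τ y) ↔ (x = i ↔ y = i))
    (a : PartIdx n) (x y : Fin n) : g a (τ x) = g a (τ y) ↔ bpVar a.1 x = bpVar a.1 y := by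
  have hmem : ∀ z, τ z ∈ S := fun z => hτ.mapsTo (Set.mem_univ z)
  have off : ∀ {β : Finset (Fin n)}, (β = a.1 ∨ β = a.1ᶜ) → ∀ {x y}, x ∉ β → y ∉ β →
      g a (τ x) = g a (τ y) := fun hβ x y hx hy =>
    (hdet _ a).2 (determinesOn_image_singletonCut hn a hβ) _ (hmem x) _ (hmem y) <| by
      simp only [forall_mem_image]
      exact fun i hi => (hsing i x y).2 (iff_of_false (fun h => hx (h ▸ hi)) fun h => hy (h ▸ hi))
  have same : ∀ x y, bpVar a.1 x = bpVar a.1 y → g a (τ x) = g a (τ y) := by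
    intro x y hxy
    rw [bpVar_eq_bpVar_iff] at hxy
    by_cases hx : x ∈ a.1
    · exact off (Or.inr rfl) (by simpa using hx) (by simpa using hxy.1 hx)
    · exact off (Or.inl rfl) hx (hxy.not.1 hx)
  refine ⟨fun h => by_contra fun hne => not_determinesOn_empty a ((hdet ∅ a).1 ?_), same x y⟩
  have hconst : ∀ z, g a (τ z) = g a (τ x) := fun z => by
    by_cases hz : bpVar a.1 z = bpVar a.1 x
    · exact same z x hz
    · refine (same z y ?_).trans h.symm
      simp only [bpVar_eq_bpVar_iff] at hz hne ⊢
      tauto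
  intro t ht t' ht' _
  obtain ⟨z, -, rfl⟩ := hτ.surjOn ht
  obtain ⟨z', -, rfl⟩ := hτ.surjOn ht'
  rw [hconst z, hconst z']

theorem exists_bijOn_of_determinesOn_iff (hS : S.Nonempty) (hcard : S.card ≤ n)
    (hdet : ∀ Δ a, DeterminesOn S g Δ a ↔ DeterminesOn univ (fun b => bpVar b.1) Δ a) :
    ∃ τ : Fin n → T, Set.BijOn τ Set.univ S ∧
      ∀ a x y, g a (τ x) = g a (τ y) ↔ bpVar a.1 x = bpVar a.1 y := by
  classical
  obtain ⟨t₀, ht₀⟩ := hS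
  rcases (NeZero.one_le : 1 ≤ n).eq_or_lt with rfl | hn
  · refine ⟨fun _ => t₀, ⟨fun _ _ => ht₀, fun _ _ _ _ _ => Subsingleton.elim _ _,
      fun t ht => ⟨0, Set.mem_univ _, card_le_one.1 hcard t₀ ht₀ t ht⟩⟩, fun a => ?_⟩
    exact (isEmpty_partIdx_one.false a).elim
  set F := fun i : Fin n => g (singletonCut hn i)
  have hF : LikeSingletonIndicators S F := fun J i hiJ hne h =>
    likeSingletonIndicators_singletonCut hn J i hiJ hne <|
      (determinesOn_image_iff (g := fun b : PartIdx n => bpVar b.1) _ J i).1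
        ((hdet _ _).1 ((determinesOn_image_iff _ J i).2 h))
  obtain ⟨τ, hτinj, hτ⟩ := hF.exists_injective_isIndicatorOn ⟨t₀, ht₀⟩ (by simpa using hcard)
  have hbij : Set.BijOn τ Set.univ S := by
    have hmaps : Set.MapsTo τ (univ : Finset (Fin n)) S := fun x _ => (hτ x).1
    refine ⟨fun x _ => (hτ x).1, hτinj.injOn, ?_⟩
    simpa using surjOn_of_injOn_of_card_le τ hmaps hτinj.injOn (by simpa using hcard)
  refine ⟨τ, hbij, eq_iff_bpVar_eq_of_singletonCut hn hdet hbij fun i x y => ?_⟩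
  rw [(hτ i).2 _ (hτ x).1 _ (hτ y).1, hτinj.eq_iff, hτinj.eq_iff]

end Structure

section Relabelling

open Finset

variable {Ω : Type*} [Fintype Ω] {μ : Ω → ℝ}

lemma determines_tuple_iff_determinesOn {ι κ : Type*} {β : ι → Type*}
    {F : (i : ι) → Ω → β i} {X : Ω → κ} {g : (i : ι) → κ → β i}
    (hg : ∀ i ω, 0 < μ ω → F i ω = g i (X ω)) (Δ : Finset ι) (a : ι) :
    Determines μ (fun ω (b : Δ) => F b ω) (F a) ↔ DeterminesOn (rvSupport μ X) g Δ a := by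
  constructor
  · rintro h _ ht _ ht' hΔ
    obtain ⟨ω, hω, rfl⟩ := mem_rvSupport_iff.1 ht
    obtain ⟨ω', hω', rfl⟩ := mem_rvSupport_iff.1 ht'
    rw [← hg a ω hω, ← hg a ω' hω']
    exact h ω ω' hω hω' (tuple_eq_iff.2 fun b hb => by rw [hg b ω hω, hg b ω' hω', hΔ b hb])
  · intro h ω ω' hω hω' heq
    rw [hg a ω hω, hg a ω' hω']
    refine h _ (mem_rvSupport_iff.2 ⟨ω, hω, rfl⟩) _ (mem_rvSupport_iff.2 ⟨ω', hω', rfl⟩)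
      fun b hb => ?_
    rw [← hg b ω hω, ← hg b ω' hω']
    exact tuple_eq_iff.1 heq b hb

lemma shCondEntropy_tuple_eq_sub {ι : Type*} [DecidableEq ι] {β : ι → Type*}
    (F : (i : ι) → Ω → β i) (Δ : Finset ι) (a : ι) :
    shCondEntropy μ (F a) (fun ω (b : Δ) => F b ω) =
      shEntropy μ (fun ω (b : {x // x ∈ insert a Δ}) => F b ω) -
        shEntropy μ (fun ω (b : Δ) => F b ω) := by
  rw [shCondEntropy]
  congr 1
  exact shEntropy_congr fun ω ω' => by simp [tuple_eq_iff, and_comm]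

variable {n : ℕ} [NeZero n]

/-- The joint entropies fix every `H(B_⟨α⟩ | B_Δ) = H(B_Δ ∪ {α}) - H(B_Δ)`, and a conditional
entropy vanishes exactly when the condition determines the variable. -/
lemma determines_iff_determinesOn_cuts {p : Fin n → ℝ} (hp : ∀ x, 0 < p x) (h0 : ∀ ω, 0 ≤ μ ω)
    {γ : PartIdx n → Type*} (B : (a : PartIdx n) → Ω → γ a)
    (hBent : ∀ Δ : Finset (PartIdx n),
      shEntropy μ (fun ω (a : {x // x ∈ Δ}) => B a.1 ω) =
        shEntropy p (fun x (a : {x // x ∈ Δ}) => bpVar a.1.1 x))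
    (Δ : Finset (PartIdx n)) (a : PartIdx n) :
    Determines μ (fun ω (b : Δ) => B b ω) (B a) ↔
      DeterminesOn univ (fun b : PartIdx n => bpVar b.1) Δ a := by
  classical
  rw [← shCondEntropy_eq_zero_iff h0, shCondEntropy_tuple_eq_sub, hBent, hBent,
    ← shCondEntropy_tuple_eq_sub (fun b : PartIdx n => bpVar b.1),
    shCondEntropy_eq_zero_iff fun x => (hp x).le]
  have h := determines_tuple_iff_determinesOn (μ := p) (X := id)
    (F := fun b : PartIdx n => bpVar b.1) (g := fun b : PartIdx n => bpVar b.1)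
    (fun _ _ _ => rfl) Δ a
  rwa [rvSupport_id_eq_univ hp] at h

theorem exists_relabelling {T : Type*} {γ : PartIdx n → Type*} (hμ : IsPMF μ) (X : Ω → T)
    (hcard : (rvSupport μ X).card ≤ n) (B : (a : PartIdx n) → Ω → γ a)
    (hBX : ∀ a, Determines μ X (B a))
    (hdep : ∀ (Δ : Finset (PartIdx n)) a, Determines μ (fun ω (b : Δ) => B b ω) (B a) ↔
      DeterminesOn univ (fun b : PartIdx n => bpVar b.1) Δ a) :
    ∃ σ : Ω → Fin n, rvSupport μ σ = univ ∧ SamePartition μ X σ ∧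
      ∀ a, SamePartition μ (B a) fun ω => bpVar a.1 (σ ω) := by
  obtain ⟨ω₀, hω₀⟩ := hμ.exists_pos
  have : Nonempty Ω := ⟨ω₀⟩
  choose g hg using fun a => (hBX a).exists_factor
  obtain ⟨τ, hτ, hgτ⟩ := exists_bijOn_of_determinesOn_iff
    ⟨X ω₀, mem_rvSupport_iff.2 ⟨ω₀, hω₀, rfl⟩⟩ hcard fun Δ a =>
      (determines_tuple_iff_determinesOn (fun a ω hω => hg a ω hω) Δ a).symm.trans (hdep Δ a)
  have hτinj : Function.Injective τ := Set.injOn_univ.1 hτ.injOn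
  have hXτ : ∀ ω, 0 < μ ω → τ (Function.invFun τ (X ω)) = X ω := fun ω hω => by
    obtain ⟨x, -, hx⟩ := hτ.surjOn (mem_rvSupport_iff.2 ⟨ω, hω, rfl⟩)
    exact Function.invFun_eq ⟨x, hx⟩
  refine ⟨fun ω => Function.invFun τ (X ω), eq_univ_of_forall fun x => ?_,
    fun ω ω' hω hω' => ⟨fun h => by simp only [h],
      fun h => by rw [← hXτ ω hω, ← hXτ ω' hω']; exact congrArg τ h⟩,
    fun a ω ω' hω hω' => ?_⟩
  · obtain ⟨ω, hω, hωx⟩ := mem_rvSupport_iff.1 (hτ.mapsTo (Set.mem_univ x))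
    exact mem_rvSupport_iff.2 ⟨ω, hω, by rw [hωx, Function.leftInverse_invFun hτinj x]⟩
  · rw [hg a ω hω, hg a ω' hω', ← hXτ ω hω, ← hXτ ω' hω', hgτ]

end Relabelling

section Consequences

open Finset

variable {Ω κ : Type*} [Fintype Ω] [Fintype κ] {μ : Ω → ℝ} {σ : Ω → κ}

lemma determines_iff_of_samePartition {S U V W : Type*} {X : Ω → S} {Y : Ω → U} {f : κ → V}
    {h : κ → W} (hσ : rvSupport μ σ = univ) (hX : SamePartition μ X fun ω => f (σ ω))
    (hY : SamePartition μ Y fun ω => h (σ ω)) :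
    Determines μ X Y ↔ ∀ x y, f x = f y → h x = h y := by
  refine ⟨fun hXY x y hxy => ?_, fun hfh ω ω' hω hω' hXω =>
    (hY ω ω' hω hω').2 (hfh _ _ ((hX ω ω' hω hω').1 hXω))⟩
  obtain ⟨ω, hω, rfl⟩ := mem_rvSupport_iff.1 (hσ ▸ mem_univ x)
  obtain ⟨ω', hω', rfl⟩ := mem_rvSupport_iff.1 (hσ ▸ mem_univ y)
  exact (hY ω ω' hω hω').1 (hXY ω ω' hω hω' ((hX ω ω' hω hω').2 hxy))

lemma card_rvSupport_of_samePartition {S V : Type*} [DecidableEq V] {X : Ω → S} {f : κ → V}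
    (hσ : rvSupport μ σ = univ) (hX : SamePartition μ X fun ω => f (σ ω)) :
    (rvSupport μ X).card = (univ.image f).card := by
  classical
  rw [rvSupport_eq_image, ← hσ, rvSupport_eq_image, image_image]
  exact card_image_eq_card_image_of_kernel_eq fun ω hω ω' hω' =>
    hX ω ω' (mem_filter.1 hω).2 (mem_filter.1 hω').2

lemma shEntropy_pos_of_samePartition {S V : Type*} {X : Ω → S} {f : κ → V} (hμ : IsPMF μ)
    (hσ : rvSupport μ σ = univ) (hX : SamePartition μ X fun ω => f (σ ω))
    (hf : ∃ x y, f x ≠ f y) : 0 < shEntropy μ X := by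
  obtain ⟨x, y, hxy⟩ := hf
  obtain ⟨ω, hω, rfl⟩ := mem_rvSupport_iff.1 (hσ ▸ mem_univ x)
  obtain ⟨ω', hω', rfl⟩ := mem_rvSupport_iff.1 (hσ ▸ mem_univ y)
  exact (shEntropy_pos_iff hμ).2 ⟨ω, ω', hω, hω', fun h => hxy ((hX ω ω' hω hω').1 h)⟩

variable {n : ℕ} [NeZero n] {T : Type*} {γ : PartIdx n → Type*} {σ : Ω → Fin n} {X : Ω → T}
  {B : (a : PartIdx n) → Ω → γ a}

lemma exists_samePartition_of_determines (hμ : IsPMF μ) (hXσ : SamePartition μ X σ)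
    (hBσ : ∀ a, SamePartition μ (B a) fun ω => bpVar a.1 (σ ω)) {Y : Ω → Bool}
    (hXY : Determines μ X Y) (hY : 0 < shEntropy μ Y) : ∃ a, SamePartition μ Y (B a) := by
  obtain ⟨ω₀, hω₀⟩ := hμ.exists_pos
  have : Nonempty Ω := ⟨ω₀⟩
  obtain ⟨φ, hφ⟩ := (hXσ.symm.determines.trans hXY).exists_factor
  obtain ⟨ω₁, ω₂, h₁, h₂, hne⟩ := (shEntropy_pos_iff hμ).1 hY
  set β := univ.filter fun x => φ x ≠ φ 0
  have hβ : β.Nonempty := by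
    rw [hφ ω₁ h₁, hφ ω₂ h₂] at hne
    by_cases h : φ (σ ω₁) = φ 0
    · exact ⟨σ ω₂, by simpa [β, ← h] using hne.symm⟩
    · exact ⟨σ ω₁, by simpa [β] using h⟩
  refine ⟨⟨β, hβ, by simp [β]⟩, SamePartition.trans (fun ω ω' hω hω' => ?_) (hBσ _).symm⟩
  rw [hφ ω hω, hφ ω' hω', bpVar_eq_bpVar_iff]
  simp only [β, mem_filter, mem_univ, true_and]
  generalize φ (σ ω) = b₁
  generalize φ (σ ω') = b₂
  generalize φ 0 = b₀
  decide +revert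

lemma exists_eq_iff_eq_of_singleton (hσ : rvSupport μ σ = univ) (hXσ : SamePartition μ X σ)
    {a : PartIdx n} (hBσ : SamePartition μ (B a) fun ω => bpVar a.1 (σ ω)) {i : Fin n}
    (hi : a.1 = {i} ∨ a.1 = ({i} : Finset (Fin n))ᶜ) :
    ∃ (t : T) (v : γ a), ∀ ω, 0 < μ ω → (B a ω = v ↔ X ω = t) := by
  obtain ⟨ωᵢ, hωᵢ, hσᵢ⟩ := mem_rvSupport_iff.1 (hσ ▸ mem_univ i)
  refine ⟨X ωᵢ, B a ωᵢ, fun ω hω => ?_⟩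
  rw [hBσ ω ωᵢ hω hωᵢ, hXσ ω ωᵢ hω hωᵢ]
  dsimp only
  rw [hσᵢ]
  exact bpVar_eq_bpVar_iff_of_singleton hi (σ ω)

end Consequences

theorem scalar_characterisation_structure_general {n : ℕ} [NeZero n]
    (p : Fin n → ℝ) (hp : ∀ i, 0 < p i)
    {Ω' T : Type*} [Fintype Ω'] (ν : Ω' → ℝ)
    (hν0 : ∀ ω, 0 ≤ ν ω) (hν1 : ∑ ω, ν ω = 1)
    (Xstar : Ω' → T) (hcard : (rvSupport ν Xstar).card ≤ n)
    {γ : PartIdx n → Type*} (B : (a : PartIdx n) → Ω' → γ a)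
    (hBent : ∀ Δ : Finset (PartIdx n),
      shEntropy ν (fun ω (a : {x // x ∈ Δ}) => B a.1 ω) =
        shEntropy p (fun x (a : {x // x ∈ Δ}) => bpVar a.1.1 x))
    (hBfun : ∀ a : PartIdx n, shCondEntropy ν (B a) Xstar = 0) :
    -- (1) distinctness and nonzero entropy
    (∀ a b : PartIdx n, a ≠ b →
      0 < shCondEntropy ν (B a) (B b) ∧ 0 < shCondEntropy ν (B b) (B a)) ∧
    (∀ a : PartIdx n, 0 < shEntropy ν (B a)) ∧
    -- (2) the support of `X*` has size exactly `n`
    (rvSupport ν Xstar).card = n ∧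
    -- (3) each `B_⟨α⟩` takes exactly two values, i.e. is a binary partition
    -- random variable of `X*`
    (∀ a : PartIdx n, (rvSupport ν (B a)).card = 2) ∧
    -- (4) completeness
    (∀ Bstar : Ω' → Bool, shCondEntropy ν Bstar Xstar = 0 → 0 < shEntropy ν Bstar →
      ∃ a : PartIdx n,
        shCondEntropy ν Bstar (B a) = 0 ∧ shCondEntropy ν (B a) Bstar = 0) ∧
    -- (5) each `B_⟨{i}⟩` is an indicator random variable of `X*`: it takes a
    -- particular value exactly when `X*` equals a particular element
    (∀ (i : Fin n) (a : PartIdx n), (a.1 = {i} ∨ a.1 = ({i} : Finset (Fin n))ᶜ) →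
      ∃ (t : T) (v : γ a), ∀ ω, 0 < ν ω → (B a ω = v ↔ Xstar ω = t)) := by
  have hν : IsPMF ν := ⟨hν0, hν1⟩
  obtain ⟨σ, hσ, hXσ, hBσ⟩ := exists_relabelling hν Xstar hcard B
    (fun a => (shCondEntropy_eq_zero_iff hν0).1 (hBfun a))
    (determines_iff_determinesOn_cuts hp hν0 B hBent)
  have hdistinct : ∀ a b : PartIdx n, a ≠ b → 0 < shCondEntropy ν (B a) (B b) := fun a b hab =>
    (shCondEntropy_pos_iff hν0).2 fun h =>
      hab (eq_of_forall_bpVar_imp ((determines_iff_of_samePartition hσ (hBσ b) (hBσ a)).1 h))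
  refine ⟨fun a b hab => ⟨hdistinct a b hab, hdistinct b a hab.symm⟩,
    fun a => shEntropy_pos_of_samePartition hν hσ (hBσ a) (exists_bpVar_ne a), ?_,
    fun a => by rw [card_rvSupport_of_samePartition hσ (hBσ a), card_image_bpVar],
    fun Bstar hdet hpos => ?_, fun i a hi => exists_eq_iff_eq_of_singleton hσ hXσ (hBσ a) hi⟩
  · simpa using card_rvSupport_of_samePartition (f := id) hσ hXσ
  · obtain ⟨a, ha⟩ := exists_samePartition_of_determines hν hXσ hBσ
      ((shCondEntropy_eq_zero_iff hν0).1 hdet) hpos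
    exact ⟨a, (shCondEntropy_eq_zero_iff hν0).2 ha.symm.determines,
      (shCondEntropy_eq_zero_iff hν0).2 ha.determines⟩

/-- Theorem 3, structural properties: in the setting of the
random scalar characterisation theorem, the variables `B_⟨α⟩` are pairwise
distinct with nonzero entropy, the support of `X*` has size exactly `n`, each
`B_⟨α⟩` is a binary partition random variable of `X*` (it takes exactly two
values and is a function of `X*`), every binary function of `X*` with positive
entropy coincides with some `B_⟨α⟩`, and each `B_⟨{i}⟩` is an indicator random
variable of `X*`. -/
theorem scalar_characterisation_structure {n : ℕ} [NeZero n]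
    (p : Fin n → ℝ) (hp : ∀ i, 0 < p i) (hsum : ∑ i, p i = 1)
    (hmono : ∀ i j : Fin n, i ≤ j → p j ≤ p i)
    {Ω' T : Type*} [Fintype Ω'] (ν : Ω' → ℝ)
    (hν0 : ∀ ω, 0 ≤ ν ω) (hν1 : ∑ ω, ν ω = 1)
    (Xstar : Ω' → T) (hcard : (rvSupport ν Xstar).card ≤ n)
    {γ : PartIdx n → Type*} (B : (a : PartIdx n) → Ω' → γ a)
    (hBent : ∀ Δ : Finset (PartIdx n),
      shEntropy ν (fun ω (a : {x // x ∈ Δ}) => B a.1 ω) =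
        shEntropy p (fun x (a : {x // x ∈ Δ}) => bpVar a.1.1 x))
    (hBfun : ∀ a : PartIdx n, shCondEntropy ν (B a) Xstar = 0) :
    -- (1) distinctness and nonzero entropy
    (∀ a b : PartIdx n, a ≠ b →
      0 < shCondEntropy ν (B a) (B b) ∧ 0 < shCondEntropy ν (B b) (B a)) ∧
    (∀ a : PartIdx n, 0 < shEntropy ν (B a)) ∧
    -- (2) the support of `X*` has size exactly `n`
    (rvSupport ν Xstar).card = n ∧
    -- (3) each `B_⟨α⟩` takes exactly two values, i.e. is a binary partition
    -- random variable of `X*`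
    (∀ a : PartIdx n, (rvSupport ν (B a)).card = 2) ∧
    -- (4) completeness
    (∀ Bstar : Ω' → Bool, shCondEntropy ν Bstar Xstar = 0 → 0 < shEntropy ν Bstar →
      ∃ a : PartIdx n,
        shCondEntropy ν Bstar (B a) = 0 ∧ shCondEntropy ν (B a) Bstar = 0) ∧
    -- (5) each `B_⟨{i}⟩` is an indicator random variable of `X*`: it takes a
    -- particular value exactly when `X*` equals a particular element
    (∀ (i : Fin n) (a : PartIdx n), (a.1 = {i} ∨ a.1 = ({i} : Finset (Fin n))ᶜ) →
      ∃ (t : T) (v : γ a), ∀ ω, 0 < ν ω → (B a ω = v ↔ Xstar ω = t)) :=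
  scalar_characterisation_structure_general p hp ν hν0 hν1 Xstar hcard B hBent hBfun
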